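/- Let A be a real symmetric n×n matrix with orthonormal eigenbasis (χ_1,…,χ_n), eigenvalues λ_1,…,λ_n ∈ [0, Λ]. Let I_0, I_1, …, I_J be pairwise disjoint subsets of [0, Λ] whose union is [0, Λ], and set I_{−1} = ∅. Let ψ_0, …, ψ_J : [0, Λ] → [0,1] satisfy Σ_{j=0}^J ψ_j(λ) = 1 for all λ ∈ [0, Λ], and ψ_j(λ) = 0 whenever λ ∉ I_{j−1} ∪ I_j (for every 0 ≤ j ≤ J). For g : [0,Λ] → ℝ and I ⊆ [0,Λ], define g(A_I)v = Σ_{ℓ : λ_ℓ ∈ I} g(λ_ℓ)·⟨χ_ℓ, v⟩·χ_ℓ. Then for every f ∈ ℝ^n: Σ_{j=0}^J Σ_{m=1}^n ( |⟨ √ψ_j(A_{I_{j−1}}) δ_m, f ⟩|² + |⟨ √ψ_j(A_{I_j}) δ_m, f ⟩|² ) = ‖f‖², i.e. the family { √ψ_j(A_{I_{j−1}}) δ_m, √ψ_j(A_{I_j}) δ_m : 0 ≤ j ≤ J, 1 ≤ m ≤ n } is a tight frame of ℝ^n with frame constant 1. -/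

import Mathlib

open MeasureTheory Real
open scoped RealInnerProductSpace Classical

/-- `specCut b lam g I v = Σ_{ℓ : lam ℓ ∈ I} g(lam ℓ) • ⟪b ℓ, v⟫ • b ℓ`, the vector
`g(A_I)v` for the symmetric matrix `A` with orthonormal eigenbasis `b` and eigenvalues `lam`. -/
noncomputable def specCut {n : ℕ} (b : OrthonormalBasis (Fin n) ℝ (EuclideanSpace ℝ (Fin n)))
    (lam : Fin n → ℝ) (g : ℝ → ℝ) (I : Set ℝ) (v : EuclideanSpace ℝ (Fin n)) :
    EuclideanSpace ℝ (Fin n) :=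
  ∑ ℓ, (if lam ℓ ∈ I then g (lam ℓ) else 0) • ⟪b ℓ, v⟫ • b ℓ

/-- `Iprev I j` is `I (j-1)` for `j ≥ 1`, and `∅` for `j = 0` (the convention `I_{−1} = ∅`). -/
def Iprev (I : ℕ → Set ℝ) : ℕ → Set ℝ
  | 0 => ∅
  | j + 1 => I j

/-! Each `√ψ_j(A_I)` is diagonal in the eigenbasis, hence symmetric, so summing `⟪T δ_m, f⟫²`
over the standard basis gives `‖T f‖² = Σ_ℓ c_ℓ² ⟪χ_ℓ, f⟫²`. As `I_{j−1}` and `I_j` are disjoint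
and `ψ_j` vanishes off their union, the two squared coefficients of index `j` add up to
`ψ_j(λ_ℓ)`, and the partition of unity leaves `Σ_ℓ ⟪χ_ℓ, f⟫² = ‖f‖²`. -/

section DiagonalOperator

variable {ι E : Type*} [Fintype ι] [NormedAddCommGroup E] [InnerProductSpace ℝ E]

noncomputable def diagOp (b : OrthonormalBasis ι ℝ E) (c : ι → ℝ) (v : E) : E :=
  ∑ ℓ, c ℓ • ⟪b ℓ, v⟫ • b ℓ

variable (b : OrthonormalBasis ι ℝ E) (c : ι → ℝ)

lemma inner_diagOp_left (v w : E) :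
    ⟪diagOp b c v, w⟫ = ∑ ℓ, c ℓ * ⟪b ℓ, v⟫ * ⟪b ℓ, w⟫ := by
  simp only [diagOp, sum_inner, real_inner_smul_left, mul_assoc]

lemma inner_diagOp_comm (v w : E) : ⟪diagOp b c v, w⟫ = ⟪v, diagOp b c w⟫ := by
  rw [real_inner_comm _ v, inner_diagOp_left, inner_diagOp_left]
  exact Finset.sum_congr rfl fun ℓ _ => by ring

lemma inner_basis_diagOp (k : ι) (v : E) : ⟪b k, diagOp b c v⟫ = c k * ⟪b k, v⟫ := by
  rw [← inner_diagOp_comm, inner_diagOp_left, Finset.sum_eq_single k]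
  · rw [b.inner_eq_one, mul_one]
  · exact fun ℓ _ hℓk => by rw [b.inner_eq_zero hℓk, mul_zero, zero_mul]
  · simp

lemma norm_diagOp_sq (v : E) : ‖diagOp b c v‖ ^ 2 = ∑ ℓ, c ℓ ^ 2 * ⟪b ℓ, v⟫ ^ 2 := by
  simp only [← b.sum_sq_inner_right (diagOp b c v), inner_basis_diagOp, mul_pow]

lemma sum_sq_inner_diagOp {ι' : Type*} [Fintype ι'] (e : OrthonormalBasis ι' ℝ E) (f : E) :
    ∑ m, ⟪diagOp b c (e m), f⟫ ^ 2 = ‖diagOp b c f‖ ^ 2 := by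
  simp only [inner_diagOp_comm, e.sum_sq_inner_right]

end DiagonalOperator

lemma specCut_eq_diagOp {n : ℕ} (b : OrthonormalBasis (Fin n) ℝ (EuclideanSpace ℝ (Fin n)))
    (lam : Fin n → ℝ) (g : ℝ → ℝ) (S : Set ℝ) :
    specCut b lam g S = diagOp b fun ℓ => S.indicator g (lam ℓ) := by
  funext v; simp only [specCut, diagOp, Set.indicator_apply]

lemma sq_indicator_sqrt_add_sq_indicator_sqrt {S T : Set ℝ} (hST : Disjoint S T) {φ : ℝ → ℝ}
    {x : ℝ} (hφ : 0 ≤ φ x) (hsupp : x ∉ S ∪ T → φ x = 0) :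
    S.indicator (fun y => √(φ y)) x ^ 2 + T.indicator (fun y => √(φ y)) x ^ 2 = φ x := by
  by_cases hS : x ∈ S
  · have hT : x ∉ T := Set.disjoint_left.mp hST hS
    simp [hS, hT, Real.sq_sqrt hφ]
  by_cases hT : x ∈ T
  · simp [hS, hT, Real.sq_sqrt hφ]
  · simp [hS, hT, hsupp (by simp [hS, hT])]

lemma disjoint_Iprev {I : ℕ → Set ℝ} {J : ℕ}
    (hIdisj : ∀ i ≤ J, ∀ j ≤ J, i ≠ j → Disjoint (I i) (I j)) {j : ℕ} (hj : j ≤ J) : Disjoint (Iprev I j) (I j) := by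
  cases j with
  | zero => exact Set.empty_disjoint _
  | succ k => exact hIdisj k (by omega) (k + 1) hj (by omega)

theorem stmt15_general
    {n J : ℕ} {Λ : ℝ}
    (b : OrthonormalBasis (Fin n) ℝ (EuclideanSpace ℝ (Fin n)))
    (lam : Fin n → ℝ) (hlam : ∀ ℓ, lam ℓ ∈ Set.Icc 0 Λ)
    (I : ℕ → Set ℝ)
    (hIdisj : ∀ i ≤ J, ∀ j ≤ J, i ≠ j → Disjoint (I i) (I j))
    (ψ : ℕ → ℝ → ℝ)
    (hψrange : ∀ j ≤ J, ∀ x ∈ Set.Icc 0 Λ, ψ j x ∈ Set.Icc (0 : ℝ) 1)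
    (hψsum : ∀ x ∈ Set.Icc 0 Λ, ∑ j ∈ Finset.range (J + 1), ψ j x = 1)
    (hψsupp : ∀ j ≤ J, ∀ x ∈ Set.Icc 0 Λ, x ∉ Iprev I j ∪ I j → ψ j x = 0)
    (f : EuclideanSpace ℝ (Fin n)) :
    ∑ j ∈ Finset.range (J + 1), ∑ m : Fin n,
      (|⟪specCut b lam (fun x => Real.sqrt (ψ j x)) (Iprev I j)
            (EuclideanSpace.single m 1), f⟫| ^ 2
        + |⟪specCut b lam (fun x => Real.sqrt (ψ j x)) (I j)
            (EuclideanSpace.single m 1), f⟫| ^ 2)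
      = ‖f‖ ^ 2 := by
  have hsplit : ∀ j ∈ Finset.range (J + 1), ∀ ℓ,
      (Iprev I j).indicator (fun x => √(ψ j x)) (lam ℓ) ^ 2
        + (I j).indicator (fun x => √(ψ j x)) (lam ℓ) ^ 2 = ψ j (lam ℓ) := by
    intro j hj ℓ
    have hjJ : j ≤ J := Finset.mem_range_succ_iff.mp hj
    exact sq_indicator_sqrt_add_sq_indicator_sqrt (disjoint_Iprev hIdisj hjJ)
      (hψrange j hjJ _ (hlam ℓ)).1 (hψsupp j hjJ _ (hlam ℓ))
  simp only [sq_abs, specCut_eq_diagOp, ← EuclideanSpace.basisFun_apply]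
  calc _ = ∑ j ∈ Finset.range (J + 1), ∑ ℓ,
        ((Iprev I j).indicator (fun x => √(ψ j x)) (lam ℓ) ^ 2
          + (I j).indicator (fun x => √(ψ j x)) (lam ℓ) ^ 2) * ⟪b ℓ, f⟫ ^ 2 := by
        refine Finset.sum_congr rfl fun j _ => ?_
        simp only [Finset.sum_add_distrib, sum_sq_inner_diagOp, norm_diagOp_sq, add_mul]
    _ = ∑ ℓ, (∑ j ∈ Finset.range (J + 1), ψ j (lam ℓ)) * ⟪b ℓ, f⟫ ^ 2 := by
        rw [Finset.sum_comm]
        refine Finset.sum_congr rfl fun ℓ _ => ?_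
        rw [Finset.sum_mul]
        exact Finset.sum_congr rfl fun j hj => by rw [hsplit j hj ℓ]
    _ = ‖f‖ ^ 2 := by
        simp only [hψsum _ (hlam _), one_mul, b.sum_sq_inner_right]

/-- Let `A` be a real symmetric `n×n` matrix with orthonormal eigenbasis `b`
and eigenvalues `lam ℓ ∈ [0,Λ]`.  Let `I 0, …, I J` be pairwise disjoint subsets of `[0,Λ]`
with union `[0,Λ]` and `I_{−1} = ∅`, and let `ψ 0, …, ψ J : [0,Λ] → [0,1]` be a partition of
unity with `ψ j` vanishing outside `I_{j−1} ∪ I_j`.  Then the family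
`{√ψ_j(A_{I_{j−1}})δ_m, √ψ_j(A_{I_j})δ_m}` is a tight frame of `ℝⁿ` with frame constant `1`. -/
theorem stmt15
    {n J : ℕ} {Λ : ℝ}
    (b : OrthonormalBasis (Fin n) ℝ (EuclideanSpace ℝ (Fin n)))
    (lam : Fin n → ℝ) (hlam : ∀ ℓ, lam ℓ ∈ Set.Icc 0 Λ)
    (I : ℕ → Set ℝ)
    (hIsub : ∀ j ≤ J, I j ⊆ Set.Icc 0 Λ)
    (hIdisj : ∀ i ≤ J, ∀ j ≤ J, i ≠ j → Disjoint (I i) (I j))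
    (hIunion : (⋃ j ∈ Finset.range (J + 1), I j) = Set.Icc 0 Λ)
    (ψ : ℕ → ℝ → ℝ)
    (hψrange : ∀ j ≤ J, ∀ x ∈ Set.Icc 0 Λ, ψ j x ∈ Set.Icc (0 : ℝ) 1)
    (hψsum : ∀ x ∈ Set.Icc 0 Λ, ∑ j ∈ Finset.range (J + 1), ψ j x = 1)
    (hψsupp : ∀ j ≤ J, ∀ x ∈ Set.Icc 0 Λ, x ∉ Iprev I j ∪ I j → ψ j x = 0)
    (f : EuclideanSpace ℝ (Fin n)) :
    ∑ j ∈ Finset.range (J + 1), ∑ m : Fin n,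
      (|⟪specCut b lam (fun x => Real.sqrt (ψ j x)) (Iprev I j)
            (EuclideanSpace.single m 1), f⟫| ^ 2
        + |⟪specCut b lam (fun x => Real.sqrt (ψ j x)) (I j)
            (EuclideanSpace.single m 1), f⟫| ^ 2)
      = ‖f‖ ^ 2 :=
  stmt15_general b lam hlam I hIdisj ψ hψrange hψsum hψsupp f
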